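/- Let 1 < p < 5, α > 0, β > 0 and γ, μ > 0. Then the infimum J(γ, μ) is finite (J(γ, μ) > −∞), and every minimizing sequence for J(γ, μ) is bounded in H¹(ℝ;ℂ³). -/

import Mathlib

/-!
In one dimension `‖f‖∞⁴ ≤ 4 ‖f‖₂² ‖f'‖₂²`: integrate `(‖f‖²)' = 2 ⟪f, f'⟫` from `-∞`, where
`‖f‖²` tends to `0` because it and its derivative are integrable. So when all masses are at most `B`,
each potential term is `O(K ^ ((p - 1) / 4))` and the coupling term is `O(K₁ ^ (1 / 4))`, `K` being
the kinetic energy. For `p < 5` both exponents are below `1`, so these terms are absorbed into a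
fraction of the kinetic energy: `E ≥ (K₁ + K₂ + K₃) / 4 - C(B)`. This bounds `J` from below and
bounds the kinetic energy along any sequence with bounded masses and energies.
-/

open MeasureTheory Filter Complex

noncomputable section

/-- Membership in `H¹(ℝ, ℂ)` (modeled via the classical derivative). -/
def InH1 (f : ℝ → ℂ) : Prop :=
  MemLp f 2 (volume : Measure ℝ) ∧ Differentiable ℝ f ∧
    MemLp (deriv f) 2 (volume : Measure ℝ)

/-- `‖f‖_{L²}²`. -/
def massSq (f : ℝ → ℂ) : ℝ := ∫ x : ℝ, ‖f x‖ ^ 2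

/-- `‖∂ₓ f‖_{L²}²`. -/
def kinetic (f : ℝ → ℂ) : ℝ := ∫ x : ℝ, ‖deriv f x‖ ^ 2

/-- `∫ |f|^{p+1}`. -/
def potential (p : ℝ) (f : ℝ → ℂ) : ℝ := ∫ x : ℝ, ‖f x‖ ^ (p + 1)

/-- `Re ∫ u₁ u₂ (conj u₃)`. -/
def interaction (u1 u2 u3 : ℝ → ℂ) : ℝ :=
  ∫ x : ℝ, (u1 x * u2 x * (starRingEnd ℂ) (u3 x)).re

/-- The energy functional `E`. -/
def energy (p α β : ℝ) (u1 u2 u3 : ℝ → ℂ) : ℝ :=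
  ((1 / 2) * kinetic u1 - β / (p + 1) * potential p u1)
    + ((1 / 2) * kinetic u2 - β / (p + 1) * potential p u2)
    + ((1 / 2) * kinetic u3 - β / (p + 1) * potential p u3)
    - α * interaction u1 u2 u3

/-- The set of energies of admissible triples for `I(γ, μ, s)`. -/
def constraintSet (p α β γ μ s : ℝ) : Set ℝ :=
  { e | ∃ u1 u2 u3 : ℝ → ℂ, InH1 u1 ∧ InH1 u2 ∧ InH1 u3 ∧
      massSq u1 = γ ∧ massSq u2 = μ ∧ massSq u3 = s ∧ e = energy p α β u1 u2 u3 }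

/-- `I(γ, μ, s)`. -/
def Iinf (p α β γ μ s : ℝ) : ℝ := sInf (constraintSet p α β γ μ s)

/-- A minimizing sequence for `I(γ, μ, s)`. -/
def MinimizingSeq (p α β γ μ s : ℝ) (u1 u2 u3 : ℕ → ℝ → ℂ) : Prop :=
  (∀ n, InH1 (u1 n) ∧ InH1 (u2 n) ∧ InH1 (u3 n)) ∧
  Tendsto (fun n => massSq (u1 n)) atTop (nhds γ) ∧
  Tendsto (fun n => massSq (u2 n)) atTop (nhds μ) ∧
  Tendsto (fun n => massSq (u3 n)) atTop (nhds s) ∧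
  Tendsto (fun n => energy p α β (u1 n) (u2 n) (u3 n)) atTop
    (nhds (Iinf p α β γ μ s))

/-- `∫_{y-r}^{y+r} (|u₁|² + |u₂|² + |u₃|²)`. -/
def localMass (u1 u2 u3 : ℝ → ℂ) (y r : ℝ) : ℝ :=
  ∫ x in Set.Icc (y - r) (y + r), (‖u1 x‖ ^ 2 + ‖u2 x‖ ^ 2 + ‖u3 x‖ ^ 2)

/-- `λ` is the concentration parameter of the sequence. -/
def IsConcentration (u1 u2 u3 : ℕ → ℝ → ℂ) (lam : ℝ) : Prop :=
  Tendsto (fun r : ℝ =>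
      limsup (fun n => ⨆ y : ℝ, localMass (u1 n) (u2 n) (u3 n) y r) atTop)
    atTop (nhds lam)

/-- The squared `H¹` norm. -/
def H1normSq (f : ℝ → ℂ) : ℝ := massSq f + kinetic f

/-- The `H¹(ℝ; ℂ³)` distance between two triples. -/
def H1dist3 (u v : (ℝ → ℂ) × (ℝ → ℂ) × (ℝ → ℂ)) : ℝ :=
  Real.sqrt (H1normSq (u.1 - v.1) + H1normSq (u.2.1 - v.2.1)
    + H1normSq (u.2.2 - v.2.2))

/-- The set `𝒢_{γ,μ,s}` of minimizers of `I(γ, μ, s)`. -/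
def GSet (p α β γ μ s : ℝ) : Set ((ℝ → ℂ) × (ℝ → ℂ) × (ℝ → ℂ)) :=
  { u | InH1 u.1 ∧ InH1 u.2.1 ∧ InH1 u.2.2 ∧
      massSq u.1 = γ ∧ massSq u.2.1 = μ ∧ massSq u.2.2 = s ∧
      energy p α β u.1 u.2.1 u.2.2 = Iinf p α β γ μ s }

/-- Symmetric decreasing rearrangement of a real function:
`f*(x) = |{t > 0 : x ∈ I_t}|` where `I_t` is the open interval centered at `0`
of length `|{ z : |f z| > t }|`. -/
def symmRearr (f : ℝ → ℝ) (x : ℝ) : ℝ :=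
  (volume { t : ℝ | 0 < t ∧
      ENNReal.ofReal (2 * |x|) < volume { z : ℝ | t < |f z| } }).toReal

/-- The constraint set for `J(γ, μ)` (with `Q₁(u) = γ`, `Q₂(u) = μ`). -/
def JconstraintSet (p α β γ μ : ℝ) : Set ℝ :=
  { e | ∃ u1 u2 u3 : ℝ → ℂ, InH1 u1 ∧ InH1 u2 ∧ InH1 u3 ∧
      massSq u1 + massSq u3 = γ ∧ massSq u2 + massSq u3 = μ ∧
      e = energy p α β u1 u2 u3 }

/-- `J(γ, μ)`. -/
def Jinf (p α β γ μ : ℝ) : ℝ := sInf (JconstraintSet p α β γ μ)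

/-- A minimizing sequence for `J(γ, μ)`. -/
def JMinimizingSeq (p α β γ μ : ℝ) (u1 u2 u3 : ℕ → ℝ → ℂ) : Prop :=
  (∀ n, InH1 (u1 n) ∧ InH1 (u2 n) ∧ InH1 (u3 n)) ∧
  Tendsto (fun n => massSq (u1 n) + massSq (u3 n)) atTop (nhds γ) ∧
  Tendsto (fun n => massSq (u2 n) + massSq (u3 n)) atTop (nhds μ) ∧
  Tendsto (fun n => energy p α β (u1 n) (u2 n) (u3 n)) atTop
    (nhds (Jinf p α β γ μ))

/-- The set `ℳ_{γ,μ}` of minimizers of `J(γ, μ)`. -/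
def MSet (p α β γ μ : ℝ) : Set ((ℝ → ℂ) × (ℝ → ℂ) × (ℝ → ℂ)) :=
  { u | InH1 u.1 ∧ InH1 u.2.1 ∧ InH1 u.2.2 ∧
      massSq u.1 + massSq u.2.2 = γ ∧ massSq u.2.1 + massSq u.2.2 = μ ∧
      energy p α β u.1 u.2.1 u.2.2 = Jinf p α β γ μ }

end

lemma massSq_nonneg (f : ℝ → ℂ) : 0 ≤ massSq f :=
  integral_nonneg fun _ => by positivity

lemma kinetic_nonneg (f : ℝ → ℂ) : 0 ≤ kinetic f :=
  integral_nonneg fun _ => by positivity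

lemma potential_nonneg (p : ℝ) (f : ℝ → ℂ) : 0 ≤ potential p f :=
  integral_nonneg fun _ => by positivity

lemma exists_mul_rpow_le_mul_add {θ C ε : ℝ} (hθ0 : 0 ≤ θ) (hθ1 : θ < 1) (hC : 0 ≤ C)
    (hε : 0 < ε) : ∃ c, ∀ t, 0 ≤ t → C * t ^ θ ≤ ε * t + c := by
  set T := (C / ε) ^ (1 - θ)⁻¹
  refine ⟨C * T ^ θ, fun t ht => ?_⟩
  rcases le_total t T with htT | hTt
  · calc C * t ^ θ ≤ C * T ^ θ := by gcongr
      _ ≤ ε * t + C * T ^ θ := le_add_of_nonneg_left (by positivity)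
  · have hCt : C ≤ ε * t ^ (1 - θ) := (div_le_iff₀' hε).mp <| calc
      C / ε = T ^ (1 - θ) := (Real.rpow_inv_rpow (by positivity) (by linarith)).symm
      _ ≤ t ^ (1 - θ) := by gcongr
    calc C * t ^ θ ≤ ε * t ^ (1 - θ) * t ^ θ := by gcongr
      _ = ε * t := by
        rw [mul_assoc, ← Real.rpow_add' ht (by norm_num), sub_add_cancel, Real.rpow_one]
      _ ≤ ε * t + C * T ^ θ := le_add_of_nonneg_right (by positivity)

section L2

variable {F G : ℝ → ℂ}

lemma integrable_norm_mul_norm (hF : MemLp F 2) (hG : MemLp G 2) :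
    Integrable (fun x => ‖F x‖ * ‖G x‖) :=
  hF.norm.integrable_mul hG.norm

lemma integral_norm_mul_norm_le (hF : MemLp F 2) (hG : MemLp G 2) :
    ∫ x, ‖F x‖ * ‖G x‖ ≤ √(massSq F) * √(massSq G) := by
  have h := integral_mul_norm_le_Lp_mul_Lq (μ := volume) Real.HolderConjugate.two_two
    (by simpa using hF) (by simpa using hG)
  simpa [massSq, Real.sqrt_eq_rpow] using h

end L2

lemma InH1.norm_sq_le {f : ℝ → ℂ} (hf : InH1 f) (x : ℝ) :
    ‖f x‖ ^ 2 ≤ 2 * √(massSq f) * √(kinetic f) := by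
  obtain ⟨hf2, hfd, hf'2⟩ := hf
  set D := fun y => 2 * inner ℝ (f y) (deriv f y)
  have hderiv : ∀ y, HasDerivAt (‖f ·‖ ^ 2) (D y) y := fun y => (hfd y).hasDerivAt.norm_sq
  have hD_le : ∀ y, ‖D y‖ ≤ 2 * (‖f y‖ * ‖deriv f y‖) := fun y => by
    rw [Real.norm_eq_abs, abs_mul, abs_two]
    gcongr
    exact abs_real_inner_le_norm _ _
  have hprod := integrable_norm_mul_norm hf2 hf'2
  have hD_int : Integrable D :=
    (hprod.const_mul 2).mono'
      ((hfd.continuous.aestronglyMeasurable.inner hf'2.1).const_mul 2) (ae_of_all _ hD_le)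
  have hlim : Tendsto (‖f ·‖ ^ 2) atBot (nhds 0) :=
    tendsto_zero_of_hasDerivAt_of_integrableOn_Iic (a := x) (fun y _ => hderiv y)
      hD_int.integrableOn (hf2.integrable_norm_pow two_ne_zero).integrableOn
  have hftc : ∫ y in Set.Iic x, D y = ‖f x‖ ^ 2 := by
    simpa using integral_Iic_of_hasDerivAt_of_tendsto' (fun y _ => hderiv y)
      hD_int.integrableOn hlim
  calc ‖f x‖ ^ 2 = ∫ y in Set.Iic x, D y := hftc.symm
    _ ≤ ∫ y, ‖D y‖ := (le_abs_self _).trans <| (norm_integral_le_integral_norm _).trans <|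
        setIntegral_le_integral hD_int.norm (ae_of_all _ fun _ => norm_nonneg _)
    _ ≤ ∫ y, 2 * (‖f y‖ * ‖deriv f y‖) := integral_mono hD_int.norm (hprod.const_mul 2) hD_le
    _ = 2 * ∫ y, ‖f y‖ * ‖deriv f y‖ := integral_const_mul _ _
    _ ≤ 2 * (√(massSq f) * √(kinetic f)) := by
        gcongr
        exact integral_norm_mul_norm_le hf2 hf'2
    _ = 2 * √(massSq f) * √(kinetic f) := by ring

lemma InH1.norm_le {f : ℝ → ℂ} (hf : InH1 f) (x : ℝ) :
    ‖f x‖ ≤ (4 * massSq f * kinetic f) ^ (1 / 4 : ℝ) := by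
  have h4 : ‖f x‖ ^ 4 ≤ 4 * massSq f * kinetic f := calc
    ‖f x‖ ^ 4 = (‖f x‖ ^ 2) ^ 2 := by ring
    _ ≤ (2 * √(massSq f) * √(kinetic f)) ^ 2 := by gcongr; exact hf.norm_sq_le x
    _ = 4 * massSq f * kinetic f := by
        rw [mul_pow, mul_pow, Real.sq_sqrt (massSq_nonneg f), Real.sq_sqrt (kinetic_nonneg f)]
        ring
  calc ‖f x‖ = (‖f x‖ ^ 4) ^ (1 / 4 : ℝ) := by
        rw [← Real.rpow_natCast, ← Real.rpow_mul (norm_nonneg _)]; norm_num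
    _ ≤ (4 * massSq f * kinetic f) ^ (1 / 4 : ℝ) := by gcongr

lemma InH1.norm_le_of_massSq_le {f : ℝ → ℂ} (hf : InH1 f) {B : ℝ} (hB : massSq f ≤ B)
    (x : ℝ) : ‖f x‖ ≤ (4 * B) ^ (1 / 4 : ℝ) * kinetic f ^ (1 / 4 : ℝ) := calc
  ‖f x‖ ≤ (4 * massSq f * kinetic f) ^ (1 / 4 : ℝ) := hf.norm_le x
  _ ≤ (4 * B * kinetic f) ^ (1 / 4 : ℝ) := by
      have := massSq_nonneg f
      have := kinetic_nonneg f
      gcongr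
  _ = (4 * B) ^ (1 / 4 : ℝ) * kinetic f ^ (1 / 4 : ℝ) :=
      Real.mul_rpow (by linarith [massSq_nonneg f]) (kinetic_nonneg f)

lemma potential_le_of_norm_le {p S : ℝ} (hp : 1 ≤ p) {f : ℝ → ℂ} (hf : MemLp f 2)
    (hS : ∀ x, ‖f x‖ ≤ S) : potential p f ≤ S ^ (p - 1) * massSq f := by
  have hpt : ∀ x, ‖f x‖ ^ (p + 1) ≤ S ^ (p - 1) * ‖f x‖ ^ 2 := fun x => calc
    ‖f x‖ ^ (p + 1) = ‖f x‖ ^ (p - 1) * ‖f x‖ ^ 2 := by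
      rw [← Real.rpow_two, ← Real.rpow_add' (norm_nonneg _) (by linarith)]; ring_nf
    _ ≤ S ^ (p - 1) * ‖f x‖ ^ 2 := by gcongr; exact hS x
  calc potential p f ≤ ∫ x, S ^ (p - 1) * ‖f x‖ ^ 2 :=
        integral_mono_of_nonneg (ae_of_all _ fun _ => by positivity)
          ((hf.integrable_norm_pow two_ne_zero).const_mul _) (ae_of_all _ hpt)
    _ = S ^ (p - 1) * massSq f := integral_const_mul _ _

lemma abs_interaction_le_of_norm_le {u1 u2 u3 : ℝ → ℂ} {S : ℝ} (hS : ∀ x, ‖u1 x‖ ≤ S)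
    (h2 : MemLp u2 2) (h3 : MemLp u3 2) :
    |interaction u1 u2 u3| ≤ S * (√(massSq u2) * √(massSq u3)) := by
  have hpt : ∀ x, ‖(u1 x * u2 x * starRingEnd ℂ (u3 x)).re‖ ≤ S * (‖u2 x‖ * ‖u3 x‖) :=
    fun x => calc
      ‖(u1 x * u2 x * starRingEnd ℂ (u3 x)).re‖ ≤ ‖u1 x * u2 x * starRingEnd ℂ (u3 x)‖ :=
        Complex.abs_re_le_norm _
      _ = ‖u1 x‖ * (‖u2 x‖ * ‖u3 x‖) := by simp only [norm_mul, Complex.norm_conj]; ring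
      _ ≤ S * (‖u2 x‖ * ‖u3 x‖) := by gcongr; exact hS x
  calc |interaction u1 u2 u3| ≤ ∫ x, ‖(u1 x * u2 x * starRingEnd ℂ (u3 x)).re‖ :=
        (Real.norm_eq_abs _).symm.trans_le (norm_integral_le_integral_norm _)
    _ ≤ ∫ x, S * (‖u2 x‖ * ‖u3 x‖) :=
        integral_mono_of_nonneg (ae_of_all _ fun _ => norm_nonneg _)
          ((integrable_norm_mul_norm h2 h3).const_mul S) (ae_of_all _ hpt)
    _ = S * ∫ x, ‖u2 x‖ * ‖u3 x‖ := integral_const_mul _ _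
    _ ≤ S * (√(massSq u2) * √(massSq u3)) := by
        gcongr
        · exact (norm_nonneg _).trans (hS 0)
        · exact integral_norm_mul_norm_le h2 h3

lemma InH1.potential_le {p B : ℝ} (hp : 1 ≤ p) {f : ℝ → ℂ} (hf : InH1 f) (hB : massSq f ≤ B) :
    potential p f ≤ ((4 * B) ^ (1 / 4 : ℝ)) ^ (p - 1) * B * kinetic f ^ (1 / 4 * (p - 1)) := by
  have hB0 : 0 ≤ B := (massSq_nonneg f).trans hB
  have := kinetic_nonneg f
  calc potential p f
      ≤ ((4 * B) ^ (1 / 4 : ℝ) * kinetic f ^ (1 / 4 : ℝ)) ^ (p - 1) * massSq f :=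
        potential_le_of_norm_le hp hf.1 (hf.norm_le_of_massSq_le hB)
    _ ≤ ((4 * B) ^ (1 / 4 : ℝ) * kinetic f ^ (1 / 4 : ℝ)) ^ (p - 1) * B := by gcongr
    _ = ((4 * B) ^ (1 / 4 : ℝ)) ^ (p - 1) * B * kinetic f ^ (1 / 4 * (p - 1)) := by
        rw [Real.mul_rpow (by positivity) (by positivity), ← Real.rpow_mul this]
        ring

lemma InH1.abs_interaction_le {u1 u2 u3 : ℝ → ℂ} {B : ℝ} (h1 : InH1 u1) (h2 : MemLp u2 2)
    (h3 : MemLp u3 2) (hB1 : massSq u1 ≤ B) (hB2 : massSq u2 ≤ B) (hB3 : massSq u3 ≤ B) :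
    |interaction u1 u2 u3| ≤ (4 * B) ^ (1 / 4 : ℝ) * B * kinetic u1 ^ (1 / 4 : ℝ) := by
  have hB0 : 0 ≤ B := (massSq_nonneg u1).trans hB1
  have := kinetic_nonneg u1
  calc |interaction u1 u2 u3|
      ≤ (4 * B) ^ (1 / 4 : ℝ) * kinetic u1 ^ (1 / 4 : ℝ) * (√(massSq u2) * √(massSq u3)) :=
        abs_interaction_le_of_norm_le (h1.norm_le_of_massSq_le hB1) h2 h3
    _ ≤ (4 * B) ^ (1 / 4 : ℝ) * kinetic u1 ^ (1 / 4 : ℝ) * (√B * √B) := by gcongr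
    _ = (4 * B) ^ (1 / 4 : ℝ) * B * kinetic u1 ^ (1 / 4 : ℝ) := by
        rw [Real.mul_self_sqrt hB0]; ring

lemma exists_energy_ge {p : ℝ} (hp : 1 ≤ p) (hp5 : p < 5) (α β : ℝ) {B : ℝ} (hB : 0 ≤ B) :
    ∃ C, ∀ u1 u2 u3 : ℝ → ℂ, InH1 u1 → InH1 u2 → InH1 u3 →
      massSq u1 ≤ B → massSq u2 ≤ B → massSq u3 ≤ B →
      (kinetic u1 + kinetic u2 + kinetic u3) / 4 - C ≤ energy p α β u1 u2 u3 := by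
  have hp1 : 0 < p + 1 := by linarith
  obtain ⟨c1, hc1⟩ := exists_mul_rpow_le_mul_add (θ := 1 / 4 * (p - 1))
    (C := |β| / (p + 1) * (((4 * B) ^ (1 / 4 : ℝ)) ^ (p - 1) * B))
    (by linarith) (by linarith) (by positivity) (by norm_num : (0 : ℝ) < 1 / 8)
  obtain ⟨c2, hc2⟩ := exists_mul_rpow_le_mul_add (θ := 1 / 4)
    (C := |α| * ((4 * B) ^ (1 / 4 : ℝ) * B))
    (by norm_num) (by norm_num) (by positivity) (by norm_num : (0 : ℝ) < 1 / 8)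
  refine ⟨3 * c1 + c2, fun u1 u2 u3 h1 h2 h3 hB1 hB2 hB3 => ?_⟩
  have hpot : ∀ u, InH1 u → massSq u ≤ B → β / (p + 1) * potential p u ≤ 1 / 8 * kinetic u + c1 :=
    fun u hu hBu => calc
      β / (p + 1) * potential p u ≤ |β| / (p + 1) * potential p u := by
        gcongr
        · exact potential_nonneg p u
        · exact le_abs_self β
      _ ≤ |β| / (p + 1) *
          (((4 * B) ^ (1 / 4 : ℝ)) ^ (p - 1) * B * kinetic u ^ (1 / 4 * (p - 1))) := by
        gcongr
        exact hu.potential_le hp hBu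
      _ ≤ 1 / 8 * kinetic u + c1 := by
        rw [← mul_assoc]
        exact hc1 _ (kinetic_nonneg u)
  have hint : α * interaction u1 u2 u3 ≤ 1 / 8 * kinetic u1 + c2 := calc
    α * interaction u1 u2 u3 ≤ |α| * |interaction u1 u2 u3| :=
      (le_abs_self _).trans (abs_mul _ _).le
    _ ≤ |α| * ((4 * B) ^ (1 / 4 : ℝ) * B * kinetic u1 ^ (1 / 4 : ℝ)) := by
      gcongr
      exact h1.abs_interaction_le h2.1 h3.1 hB1 hB2 hB3
    _ ≤ 1 / 8 * kinetic u1 + c2 := by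
      rw [← mul_assoc]
      exact hc2 _ (kinetic_nonneg u1)
  have := hpot u1 h1 hB1
  have := hpot u2 h2 hB2
  have := hpot u3 h3 hB3
  have := kinetic_nonneg u2
  have := kinetic_nonneg u3
  unfold energy
  linarith

lemma exists_energy_ge_of_Q_le {p : ℝ} (hp : 1 ≤ p) (hp5 : p < 5) (α β γ μ : ℝ) :
    ∃ C, ∀ u1 u2 u3 : ℝ → ℂ, InH1 u1 → InH1 u2 → InH1 u3 →
      massSq u1 + massSq u3 ≤ γ → massSq u2 + massSq u3 ≤ μ →
      (kinetic u1 + kinetic u2 + kinetic u3) / 4 - C ≤ energy p α β u1 u2 u3 := by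
  obtain ⟨C, hC⟩ := exists_energy_ge hp hp5 α β (B := |γ| + |μ|) (by positivity)
  refine ⟨C, fun u1 u2 u3 h1 h2 h3 hγ hμ => hC u1 u2 u3 h1 h2 h3 ?_ ?_ ?_⟩ <;>
    linarith [massSq_nonneg u1, massSq_nonneg u2, massSq_nonneg u3, le_abs_self γ,
      le_abs_self μ, abs_nonneg γ, abs_nonneg μ]

theorem Jinf_finite_and_minimizing_sequences_bounded_general
    (p α β γ μ : ℝ) (hp : 1 < p) (hp5 : p < 5) :
    BddBelow (JconstraintSet p α β γ μ) ∧
    ∀ u1 u2 u3 : ℕ → ℝ → ℂ, JMinimizingSeq p α β γ μ u1 u2 u3 →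
      ∃ C : ℝ, ∀ n, H1normSq (u1 n) + H1normSq (u2 n) + H1normSq (u3 n) ≤ C := by
  refine ⟨?_, ?_⟩
  · obtain ⟨C, hC⟩ := exists_energy_ge_of_Q_le hp.le hp5 α β γ μ
    refine ⟨-C, ?_⟩
    rintro _ ⟨u1, u2, u3, h1, h2, h3, hQ1, hQ2, rfl⟩
    have := hC u1 u2 u3 h1 h2 h3 hQ1.le hQ2.le
    linarith [kinetic_nonneg u1, kinetic_nonneg u2, kinetic_nonneg u3]
  · rintro u1 u2 u3 ⟨hH1, hQ1, hQ2, hE⟩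
    obtain ⟨γ', hγ'⟩ := hQ1.bddAbove_range
    obtain ⟨μ', hμ'⟩ := hQ2.bddAbove_range
    obtain ⟨E, hE⟩ := hE.bddAbove_range
    obtain ⟨C, hC⟩ := exists_energy_ge_of_Q_le hp.le hp5 α β γ' μ'
    refine ⟨γ' + μ' + 4 * (E + C), fun n => ?_⟩
    have hQ1n := hγ' ⟨n, rfl⟩
    have hQ2n := hμ' ⟨n, rfl⟩
    have := hC _ _ _ (hH1 n).1 (hH1 n).2.1 (hH1 n).2.2 hQ1n hQ2n
    simp only [H1normSq]
    linarith [massSq_nonneg (u3 n), hE ⟨n, rfl⟩]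

theorem Jinf_finite_and_minimizing_sequences_bounded
    (p α β γ μ : ℝ) (hp : 1 < p) (hp5 : p < 5) (hα : 0 < α) (hβ : 0 < β)
    (hγ : 0 < γ) (hμ : 0 < μ) :
    BddBelow (JconstraintSet p α β γ μ) ∧
    ∀ u1 u2 u3 : ℕ → ℝ → ℂ, JMinimizingSeq p α β γ μ u1 u2 u3 →
      ∃ C : ℝ, ∀ n, H1normSq (u1 n) + H1normSq (u2 n) + H1normSq (u3 n) ≤ C :=
  Jinf_finite_and_minimizing_sequences_bounded_general p α β γ μ hp hp5
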